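/- If K ≤ 0, then for every real φ ∈ L²(I) one has ⟨𝓛φ, φ⟩ ≤ −(p/2)∫₀¹∫₀¹ (φ(x) − φ(y))² dx dy ≤ 0, and ⟨𝓛φ, φ⟩ < 0 unless φ is almost everywhere equal to a constant. In particular, for K ≤ 0 the linearization 𝓛 of the continuum limit about the stationary solution u ≡ 0 is negative semidefinite, with kernel consisting exactly of the constant functions. -/

import Mathlib

open MeasureTheory Real Set

noncomputable section

/-- The Lebesgue measure restricted to the interval `I = [0,1]`. -/
def μI : MeasureTheory.Measure ℝ := MeasureTheory.volume.restrict (Set.Icc (0:ℝ) 1)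

/-- The graphon of the `κ`-nearest neighbor graph. -/
def W2 (κ : ℝ) (x y : ℝ) : ℝ := if |x - y| ≤ κ ∨ 1 - κ ≤ |x - y| then 1 else 0

/-- The linearization `𝓛` of the continuum limit about the stationary solution `u ≡ 0`:
`(𝓛φ)(x) = ∫₀¹ (p - 2K·W₂(x,y))(φ(y) - φ(x)) dy`. -/
def Lop (p K κ : ℝ) (φ : ℝ → ℝ) (x : ℝ) : ℝ :=
  ∫ y in Set.Icc (0:ℝ) 1, (p - 2 * K * W2 κ x y) * (φ y - φ x)

/-!
Writing `w(x,y) = p - 2K·W₂(x,y)`, the quadratic form of `𝓛` is the Dirichlet form of the symmetric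
kernel `w`: swapping `x` and `y` in `∫∫ w(x,y)(φ(y) - φ(x))φ(x)` and averaging gives
`⟨𝓛φ, φ⟩ = -½ ∫∫ w(x,y)(φ(x) - φ(y))²`. For `K ≤ 0` we have `w ≥ p`, whence the bound, and the
double integral of `(φ(x) - φ(y))²` vanishes only when `φ(x) = φ(y)` for almost every pair, i.e. when
`φ` is a.e. constant.
-/

open Function

def kernelLaplacian {α : Type*} [MeasurableSpace α] (μ : Measure α) (w : α → α → ℝ)
    (φ : α → ℝ) (x : α) : ℝ :=
  ∫ y, w x y * (φ y - φ x) ∂μ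

section KernelLaplacian

variable {α : Type*} [MeasurableSpace α] {μ : Measure α} {w : α → α → ℝ} {φ : α → ℝ}

theorem kernelLaplacian_ae_eq_zero_of_ae_eq_const {c : ℝ} (hc : φ =ᵐ[μ] fun _ => c) :
    kernelLaplacian μ w φ =ᵐ[μ] 0 := by
  filter_upwards [hc] with x hx
  refine integral_eq_zero_of_ae ?_
  filter_upwards [hc] with y hy
  simp [hx, hy]

variable [IsFiniteMeasure μ]

theorem MeasureTheory.MemLp.integrable_sq_sub_prod (hφ : MemLp φ 2 μ) :
    Integrable (fun z : α × α => (φ z.1 - φ z.2) ^ 2) (μ.prod μ) := by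
  have hφ1 := hφ.integrable one_le_two
  have h := ((hφ.integrable_sq.comp_fst μ).add (hφ.integrable_sq.comp_snd μ)).sub
    ((hφ1.mul_prod hφ1).const_mul 2)
  convert h using 1
  ext z
  simp only [Pi.add_apply, Pi.sub_apply]
  ring

theorem MeasureTheory.MemLp.integrable_mul_sub_mul_prod (hφ : MemLp φ 2 μ) :
    Integrable (fun z : α × α => (φ z.2 - φ z.1) * φ z.1) (μ.prod μ) := by
  have hφ1 := hφ.integrable one_le_two
  have h := (hφ1.mul_prod hφ1).sub (hφ.integrable_sq.comp_fst μ)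
  convert h using 1
  ext z
  simp only [Pi.sub_apply]
  ring

variable {C : ℝ}

theorem MeasureTheory.MemLp.integrable_kernel_mul_sq_sub_prod (hw : AEStronglyMeasurable (uncurry w) (μ.prod μ))
    (hwC : ∀ x y, |w x y| ≤ C) (hφ : MemLp φ 2 μ) :
    Integrable (fun z : α × α => w z.1 z.2 * (φ z.1 - φ z.2) ^ 2) (μ.prod μ) :=
  hφ.integrable_sq_sub_prod.bdd_mul hw (ae_of_all _ fun z => hwC z.1 z.2)

theorem integral_kernelLaplacian_mul_self (hsymm : ∀ x y, w x y = w y x)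
    (hw : AEStronglyMeasurable (uncurry w) (μ.prod μ)) (hwC : ∀ x y, |w x y| ≤ C)
    (hφ : MemLp φ 2 μ) :
    ∫ x, kernelLaplacian μ w φ x * φ x ∂μ
      = -(1 / 2) * ∫ x, ∫ y, w x y * (φ x - φ y) ^ 2 ∂μ ∂μ := by
  set F : α × α → ℝ := fun z => w z.1 z.2 * ((φ z.2 - φ z.1) * φ z.1)
  have hF : Integrable F (μ.prod μ) :=
    hφ.integrable_mul_sub_mul_prod.bdd_mul hw (ae_of_all _ fun z => hwC z.1 z.2)
  have hF_swap : Integrable (fun z => F z.swap) (μ.prod μ) := hF.swap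
  have hG := hφ.integrable_kernel_mul_sq_sub_prod hw hwC
  have hF_add_swap : ∀ z, F z + F z.swap = -(w z.1 z.2 * (φ z.1 - φ z.2) ^ 2) := by
    intro z
    simp only [F, Prod.fst_swap, Prod.snd_swap, hsymm z.2 z.1]
    ring
  calc ∫ x, kernelLaplacian μ w φ x * φ x ∂μ = ∫ z, F z ∂(μ.prod μ) := by
        simp_rw [kernelLaplacian, ← integral_mul_const, mul_assoc]
        exact integral_integral hF
    _ = (1 / 2) * ∫ z, (F z + F z.swap) ∂(μ.prod μ) := by
        rw [integral_add hF hF_swap, integral_prod_swap]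
        ring
    _ = -(1 / 2) * ∫ x, ∫ y, w x y * (φ x - φ y) ^ 2 ∂μ ∂μ := by
        simp_rw [hF_add_swap, integral_neg]
        rw [integral_integral (f := fun x y => w x y * (φ x - φ y) ^ 2) hG]
        ring

theorem integral_kernelLaplacian_mul_self_le {p : ℝ} (hsymm : ∀ x y, w x y = w y x)
    (hw : AEStronglyMeasurable (uncurry w) (μ.prod μ)) (hwC : ∀ x y, |w x y| ≤ C)
    (hpw : ∀ x y, p ≤ w x y) (hφ : MemLp φ 2 μ) :
    ∫ x, kernelLaplacian μ w φ x * φ x ∂μ ≤ -(p / 2) * ∫ x, ∫ y, (φ x - φ y) ^ 2 ∂μ ∂μ := by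
  have hD := hφ.integrable_sq_sub_prod
  have hG := hφ.integrable_kernel_mul_sq_sub_prod hw hwC
  have hpG : p * ∫ z, (φ z.1 - φ z.2) ^ 2 ∂(μ.prod μ)
      ≤ ∫ z, w z.1 z.2 * (φ z.1 - φ z.2) ^ 2 ∂(μ.prod μ) := by
    rw [← integral_const_mul]
    exact integral_mono (hD.const_mul p) hG fun z =>
      mul_le_mul_of_nonneg_right (hpw z.1 z.2) (sq_nonneg _)
  rw [integral_kernelLaplacian_mul_self hsymm hw hwC hφ, integral_integral hG,
    integral_integral hD]
  linarith

theorem integral_integral_sq_sub_eq_zero_iff (hφ : MemLp φ 2 μ) :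
    ∫ x, ∫ y, (φ x - φ y) ^ 2 ∂μ ∂μ = 0 ↔ ∃ c : ℝ, φ =ᵐ[μ] fun _ => c := by
  constructor
  · intro h
    rw [integral_integral hφ.integrable_sq_sub_prod,
      integral_eq_zero_iff_of_nonneg (fun z => sq_nonneg _) hφ.integrable_sq_sub_prod] at h
    rcases eq_zero_or_neZero μ with rfl | _
    · exact ⟨0, by simp [Filter.EventuallyEq]⟩
    have h_ae_ae : ∀ᵐ x ∂μ, ∀ᵐ y ∂μ, φ x = φ y :=
      Measure.ae_ae_of_ae_prod (h.mono fun z hz => by simpa [sub_eq_zero] using hz)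
    obtain ⟨x, hx⟩ := h_ae_ae.exists
    exact ⟨φ x, hx.mono fun y hy => hy.symm⟩
  · rintro ⟨c, hc⟩
    refine integral_eq_zero_of_ae ?_
    filter_upwards [hc] with x hx
    refine integral_eq_zero_of_ae ?_
    filter_upwards [hc] with y hy
    simp [hx, hy]

end KernelLaplacian

instance isFiniteMeasure_μI : IsFiniteMeasure μI := by
  unfold μI
  infer_instance

theorem W2_comm (κ x y : ℝ) : W2 κ x y = W2 κ y x := by
  rw [W2, W2, abs_sub_comm]

theorem W2_nonneg (κ x y : ℝ) : 0 ≤ W2 κ x y := by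
  unfold W2
  split_ifs <;> norm_num

theorem W2_le_one (κ x y : ℝ) : W2 κ x y ≤ 1 := by
  unfold W2
  split_ifs <;> norm_num

theorem measurable_uncurry_W2 (κ : ℝ) : Measurable (uncurry (W2 κ)) := by
  have hdist : Measurable fun z : ℝ × ℝ => |z.1 - z.2| := (measurable_fst.sub measurable_snd).abs
  exact Measurable.ite ((measurableSet_le hdist measurable_const).union
    (measurableSet_le measurable_const hdist)) measurable_const measurable_const

theorem Lop_negative_semidefinite_general
    (κ p K : ℝ) (hp : 0 < p) (hK : K ≤ 0)
    (φ : ℝ → ℝ) (hφ : MeasureTheory.MemLp φ 2 μI) :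
    ((∫ x in Set.Icc (0:ℝ) 1, Lop p K κ φ x * φ x)
      ≤ -(p/2) * ∫ x in Set.Icc (0:ℝ) 1, ∫ y in Set.Icc (0:ℝ) 1, (φ x - φ y) ^ 2) ∧
    (-(p/2) * (∫ x in Set.Icc (0:ℝ) 1, ∫ y in Set.Icc (0:ℝ) 1, (φ x - φ y) ^ 2) ≤ 0) ∧
    ((¬ ∃ c : ℝ, φ =ᵐ[μI] fun _ => c) →
      (∫ x in Set.Icc (0:ℝ) 1, Lop p K κ φ x * φ x) < 0) ∧
    (((fun x => Lop p K κ φ x) =ᵐ[μI] fun _ => (0:ℝ)) ↔ ∃ c : ℝ, φ =ᵐ[μI] fun _ => c) := by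
  set w : ℝ → ℝ → ℝ := fun x y => p - 2 * K * W2 κ x y
  have hLop : Lop p K κ φ = kernelLaplacian μI w φ := rfl
  have hsymm : ∀ x y, w x y = w y x := fun x y => by simp only [w, W2_comm κ x y]
  have hw : AEStronglyMeasurable (uncurry w) (μI.prod μI) :=
    (measurable_const.sub ((measurable_uncurry_W2 κ).const_mul _)).aestronglyMeasurable
  have hpw : ∀ x y, p ≤ w x y := fun x y => by nlinarith [W2_nonneg κ x y]
  have hwC : ∀ x y, |w x y| ≤ p - 2 * K := fun x y =>
    abs_le.2 ⟨by linarith [hpw x y], by nlinarith [W2_le_one κ x y]⟩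
  have hle : ∫ x in Icc (0:ℝ) 1, Lop p K κ φ x * φ x
      ≤ -(p/2) * ∫ x in Icc (0:ℝ) 1, ∫ y in Icc (0:ℝ) 1, (φ x - φ y) ^ 2 :=
    integral_kernelLaplacian_mul_self_le hsymm hw hwC hpw hφ
  have hD : 0 ≤ ∫ x in Icc (0:ℝ) 1, ∫ y in Icc (0:ℝ) 1, (φ x - φ y) ^ 2 :=
    integral_nonneg fun x => integral_nonneg fun y => sq_nonneg _
  have hneg : (¬ ∃ c : ℝ, φ =ᵐ[μI] fun _ => c) →
      ∫ x in Icc (0:ℝ) 1, Lop p K κ φ x * φ x < 0 := fun hnc =>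
    hle.trans_lt <| mul_neg_of_neg_of_pos (by linarith)
      (hD.lt_of_ne' ((integral_integral_sq_sub_eq_zero_iff hφ).not.2 hnc))
  refine ⟨hle, mul_nonpos_of_nonpos_of_nonneg (by linarith) hD, hneg, ⟨fun hker => ?_, ?_⟩⟩
  · by_contra hnc
    refine (hneg hnc).ne (integral_eq_zero_of_ae ?_)
    filter_upwards [hker] with x hx
    simp [hx]
  · rintro ⟨c, hc⟩
    rw [hLop]
    exact kernelLaplacian_ae_eq_zero_of_ae_eq_const hc

/-- For `K ≤ 0` the operator `𝓛` is negative semidefinite: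
`⟨𝓛φ, φ⟩ ≤ -(p/2)∫∫(φ(x) - φ(y))² dx dy ≤ 0`, with `⟨𝓛φ, φ⟩ < 0` unless `φ` is a.e. constant;
moreover the kernel of `𝓛` consists exactly of the (a.e.) constant functions. -/
theorem Lop_negative_semidefinite
    (κ p K : ℝ) (hκ : κ ∈ Set.Ioo (0:ℝ) (1/2)) (hp : 0 < p) (hK : K ≤ 0)
    (φ : ℝ → ℝ) (hφ : MeasureTheory.MemLp φ 2 μI) :
    ((∫ x in Set.Icc (0:ℝ) 1, Lop p K κ φ x * φ x)
      ≤ -(p/2) * ∫ x in Set.Icc (0:ℝ) 1, ∫ y in Set.Icc (0:ℝ) 1, (φ x - φ y) ^ 2) ∧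
    (-(p/2) * (∫ x in Set.Icc (0:ℝ) 1, ∫ y in Set.Icc (0:ℝ) 1, (φ x - φ y) ^ 2) ≤ 0) ∧
    ((¬ ∃ c : ℝ, φ =ᵐ[μI] fun _ => c) →
      (∫ x in Set.Icc (0:ℝ) 1, Lop p K κ φ x * φ x) < 0) ∧
    (((fun x => Lop p K κ φ x) =ᵐ[μI] fun _ => (0:ℝ)) ↔ ∃ c : ℝ, φ =ᵐ[μI] fun _ => c) :=
  Lop_negative_semidefinite_general κ p K hp hK φ hφ
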